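/- arXiv:2309.00758 — 3 statements merged into one kernel-verified Lean document; each statement's English description precedes it below -/
import Mathlib

section
/- Let n ≥ 1 and let ψ be defined by ψ(A) = A if 1 ∉ A, ψ(A) = (Aᶜ ∪ {1}) \ {0} if 1 ∈ A, on subsets of {0,1,...,n}. Let S₁ ⊆ S₂ ⊆ ... ⊆ S_k be a chain of subsets of {1,...,n} (each avoiding 0) and suppose S_i is the first element containing 1 (i.e., 1 ∉ S_j for j < i and 1 ∈ S_j for j ≥ i). Then for all u with 1 ≤ u ≤ i−1 and all v with i ≤ v ≤ k, we have ψ(S_u) ∩ ψ(S_v) = ∅; moreover ψ(S₁) ⊆ ... ⊆ ψ(S_{i−1}) and ψ(S_k) ⊆ ψ(S_{k−1}) ⊆ ... ⊆ ψ(S_i). -/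
open Classical in
noncomputable def psi (n : ℕ) (A : Set (Fin (n + 1))) : Set (Fin (n + 1)) :=
  if (1 : Fin (n + 1)) ∈ A then (Aᶜ ∪ {1}) \ {0} else A

section psi

variable {n : ℕ} {A B : Set (Fin (n + 1))}

theorem psi_of_notMem (h : (1 : Fin (n + 1)) ∉ A) : psi n A = A := by
  rw [psi, if_neg h]

theorem psi_of_mem (h : (1 : Fin (n + 1)) ∈ A) : psi n A = (Aᶜ ∪ {1}) \ {0} := by
  rw [psi, if_pos h]

theorem psi_mono_of_notMem (hAB : A ⊆ B) (hB : (1 : Fin (n + 1)) ∉ B) : psi n A ⊆ psi n B := by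
  rw [psi_of_notMem hB, psi_of_notMem fun hA => hB (hAB hA)]
  exact hAB

theorem psi_anti_of_mem (hAB : A ⊆ B) (hA : (1 : Fin (n + 1)) ∈ A) : psi n B ⊆ psi n A := by
  rw [psi_of_mem hA, psi_of_mem (hAB hA)]
  exact Set.sdiff_subset_sdiff_left (Set.union_subset_union_left _ (Set.compl_subset_compl.mpr hAB))

theorem disjoint_psi_of_notMem_of_mem (hAB : A ⊆ B) (hA : (1 : Fin (n + 1)) ∉ A)
    (hB : (1 : Fin (n + 1)) ∈ B) : Disjoint (psi n A) (psi n B) := by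
  rw [psi_of_notMem hA, psi_of_mem hB, Set.disjoint_left]
  rintro x hxA ⟨hxB | rfl, -⟩
  · exact hxB (hAB hxA)
  · exact hA hxA

end psi

theorem stmt_3_general (n k : ℕ) (S : Fin k → Set (Fin (n + 1)))
    (hmono : Monotone S)
    (i : Fin k)
    (hbefore : ∀ j, j < i → (1 : Fin (n + 1)) ∉ S j)
    (hafter : ∀ j, i ≤ j → (1 : Fin (n + 1)) ∈ S j) :
    (∀ u v : Fin k, u < i → i ≤ v → psi n (S u) ∩ psi n (S v) = ∅) ∧
    (∀ u u' : Fin k, u ≤ u' → u' < i → psi n (S u) ⊆ psi n (S u')) ∧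
    (∀ v v' : Fin k, i ≤ v → v ≤ v' → psi n (S v') ⊆ psi n (S v)) := by
  refine ⟨fun u v hu hv => ?_, fun u u' huu' hu' => ?_, fun v v' hv hvv' => ?_⟩
  · exact Set.disjoint_iff_inter_eq_empty.mp <|
      disjoint_psi_of_notMem_of_mem (hmono (hu.trans_le hv).le) (hbefore u hu) (hafter v hv)
  · exact psi_mono_of_notMem (hmono huu') (hbefore u' hu')
  · exact psi_anti_of_mem (hmono hvv') (hafter v hv)

theorem stmt_3 (n k : ℕ) (hn : 1 ≤ n) (S : Fin k → Set (Fin (n + 1)))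
    (hmono : Monotone S) (h0 : ∀ j, (0 : Fin (n + 1)) ∉ S j)
    (i : Fin k)
    (hbefore : ∀ j, j < i → (1 : Fin (n + 1)) ∉ S j)
    (hafter : ∀ j, i ≤ j → (1 : Fin (n + 1)) ∈ S j) :
    (∀ u v : Fin k, u < i → i ≤ v → psi n (S u) ∩ psi n (S v) = ∅) ∧
    (∀ u u' : Fin k, u ≤ u' → u' < i → psi n (S u) ⊆ psi n (S u')) ∧
    (∀ v v' : Fin k, i ≤ v → v ≤ v' → psi n (S v') ⊆ psi n (S v)) :=
  stmt_3_general n k S hmono i hbefore hafter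
end

section
/- Let n ≥ 1 and let ψ be defined by ψ(A) = A if 1 ∉ A, ψ(A) = (Aᶜ ∪ {1}) \ {0} if 1 ∈ A, on subsets of {0,1,...,n}. Let S₁ ⊆ ... ⊆ S_k and T₁ ⊆ ... ⊆ T_ℓ be two chains of subsets of {1,...,n} with S_k ∩ T_ℓ = ∅. Suppose 1 ∈ S₁ (so 1 belongs to every S_u) and 1 ∉ T_ℓ. Then the images form a single chain: ψ(T₁) ⊆ ... ⊆ ψ(T_ℓ) ⊆ ψ(S_k) ⊆ ψ(S_{k−1}) ⊆ ... ⊆ ψ(S₁). -/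
namespace Psi

variable {n : ℕ} {A B : Set (Fin (n + 1))}

theorem eq_self_of_one_notMem (hA : (1 : Fin (n + 1)) ∉ A) : psi n A = A := by
  simp [psi, hA]

theorem eq_of_one_mem (hA : (1 : Fin (n + 1)) ∈ A) : psi n A = (Aᶜ ∪ {1}) \ {0} := by
  simp [psi, hA]

theorem subset_of_one_mem_of_subset (hA : (1 : Fin (n + 1)) ∈ A) (hAB : A ⊆ B) :
    psi n B ⊆ psi n A := by
  rw [eq_of_one_mem hA, eq_of_one_mem (hAB hA)]
  exact Set.sdiff_subset_sdiff_left (Set.union_subset_union_left _ (Set.compl_subset_compl.mpr hAB))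

theorem subset_of_disjoint (hA : (1 : Fin (n + 1)) ∈ A) (hB : (1 : Fin (n + 1)) ∉ B)
    (hB0 : (0 : Fin (n + 1)) ∉ B) (hAB : Disjoint A B) : psi n B ⊆ psi n A := by
  rw [eq_self_of_one_notMem hB, eq_of_one_mem hA]
  intro x hx
  exact ⟨Or.inl (hAB.notMem_of_mem_right hx), fun hx0 => hB0 (hx0 ▸ hx)⟩

theorem monotone_comp {ι : Type*} [Preorder ι] {T : ι → Set (Fin (n + 1))} (hT : Monotone T)
    (h1T : ∀ i, (1 : Fin (n + 1)) ∉ T i) : Monotone (fun i => psi n (T i)) := by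
  intro i j hij
  simpa only [eq_self_of_one_notMem (h1T _)] using hT hij

theorem antitone_comp {ι : Type*} [Preorder ι] {S : ι → Set (Fin (n + 1))} (hS : Monotone S)
    (h1S : ∀ i, (1 : Fin (n + 1)) ∈ S i) : Antitone (fun i => psi n (S i)) :=
  fun _ _ hij => subset_of_one_mem_of_subset (h1S _) (hS hij)

end Psi

theorem stmt_5_general (n k l : ℕ)
    (S : Fin (k + 1) → Set (Fin (n + 1))) (T : Fin (l + 1) → Set (Fin (n + 1)))
    (hSmono : Monotone S) (hTmono : Monotone T)
    (hT0 : ∀ v, (0 : Fin (n + 1)) ∉ T v)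
    (hdisj : S (Fin.last k) ∩ T (Fin.last l) = ∅)
    (h1S : (1 : Fin (n + 1)) ∈ S 0)
    (h1T : (1 : Fin (n + 1)) ∉ T (Fin.last l)) :
    Monotone (fun v => psi n (T v)) ∧
      psi n (T (Fin.last l)) ⊆ psi n (S (Fin.last k)) ∧
      Antitone (fun u => psi n (S u)) := by
  have h1Tv : ∀ v, (1 : Fin (n + 1)) ∉ T v := fun v hv => h1T (hTmono (Fin.le_last v) hv)
  have h1Su : ∀ u, (1 : Fin (n + 1)) ∈ S u := fun u => hSmono (Fin.zero_le u) h1S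
  exact ⟨Psi.monotone_comp hTmono h1Tv,
    Psi.subset_of_disjoint (h1Su _) h1T (hT0 _) (Set.disjoint_iff_inter_eq_empty.mpr hdisj),
    Psi.antitone_comp hSmono h1Su⟩

theorem stmt_5 (n k l : ℕ) (hn : 1 ≤ n)
    (S : Fin (k + 1) → Set (Fin (n + 1))) (T : Fin (l + 1) → Set (Fin (n + 1)))
    (hSmono : Monotone S) (hTmono : Monotone T)
    (hS0 : ∀ u, (0 : Fin (n + 1)) ∉ S u) (hT0 : ∀ v, (0 : Fin (n + 1)) ∉ T v)
    (hdisj : S (Fin.last k) ∩ T (Fin.last l) = ∅)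
    (h1S : (1 : Fin (n + 1)) ∈ S 0)
    (h1T : (1 : Fin (n + 1)) ∉ T (Fin.last l)) :
    Monotone (fun v => psi n (T v)) ∧
      psi n (T (Fin.last l)) ⊆ psi n (S (Fin.last k)) ∧
      Antitone (fun u => psi n (S u)) :=
  stmt_5_general n k l S T hSmono hTmono hT0 hdisj h1S h1T
end

section
/- Let (a_0, ..., a_p) and (b_0, ..., b_q) be finite sequences of nonnegative real numbers, each log concave (a_i² ≥ a_{i−1}a_{i+1} for all interior i, similarly for b) with no internal zeros (each consecutive pair of the form a_{i-1}, a_{i+1} nonzero implies a_i nonzero; assume all terms positive for simplicity). Then the convolution c_k = Σ_{i} a_i b_{k−i} (for 0 ≤ k ≤ p+q, with out-of-range terms zero) is a log concave sequence: c_k² ≥ c_{k−1} c_{k+1} for all 1 ≤ k ≤ p+q−1. -/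
/-!
Both `a` and `b` are PF₂ sequences: positivity on an interval together with log concavity makes
the ratios `a (i + 1) / a i` nonincreasing, i.e. every 2 × 2 minor of the Toeplitz matrix
`(a (j - i))` is nonnegative. Writing `c k` and its neighbours as bilinear pairings of rows of
these Toeplitz matrices, `c k ^ 2 - c (k - 1) * c (k + 1)` becomes, by the Binet–Cauchy identity,
half a sum of products of such minors, hence is nonnegative.
-/

open Finset

theorem two_mul_sum_mul_sum_sub_sum_mul_sum {ι R : Type*} [CommRing R] (s : Finset ι)
    (x y u v : ι → R) :
    2 * ((∑ i ∈ s, x i * u i) * (∑ i ∈ s, y i * v i) -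
        (∑ i ∈ s, y i * u i) * (∑ i ∈ s, x i * v i)) =
      ∑ i ∈ s, ∑ j ∈ s, (x i * y j - y i * x j) * (u i * v j - v i * u j) := by
  set g : ι → ι → R := fun i j => x i * u i * (y j * v j) - y i * u i * (x j * v j)
  calc _ = 2 * ∑ i ∈ s, ∑ j ∈ s, g i j := by
        simp only [g, sum_mul_sum, ← sum_sub_distrib]
    _ = ∑ i ∈ s, ∑ j ∈ s, g i j + ∑ i ∈ s, ∑ j ∈ s, g j i := by
        rw [sum_comm (f := fun i j => g j i)]
        ring
    _ = _ := by
        simp only [← sum_add_distrib]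
        refine sum_congr rfl fun i _ => sum_congr rfl fun j _ => ?_
        ring

section TP2

variable {ι R : Type*} [LinearOrder ι] [CommRing R] [LinearOrder R] [IsStrictOrderedRing R]

/-- The `2 × ι` matrix with rows `x` and `y` is TP₂: its `2 × 2` minors are nonnegative. -/
def TP2 (x y : ι → R) : Prop :=
  ∀ ⦃i j⦄, i ≤ j → y i * x j ≤ x i * y j

theorem TP2.minor_mul_minor_nonneg {x y u v : ι → R} (hxy : TP2 x y) (huv : TP2 u v) (i j : ι) :
    0 ≤ (x i * y j - y i * x j) * (u i * v j - v i * u j) := by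
  rcases le_total i j with hij | hji
  · exact mul_nonneg (sub_nonneg.2 (hxy hij)) (sub_nonneg.2 (huv hij))
  · exact mul_nonneg_of_nonpos_of_nonpos (by linarith [hxy hji]) (by linarith [huv hji])

theorem TP2.sum_mul_sum_le {x y u v : ι → R} (hxy : TP2 x y) (huv : TP2 u v) (s : Finset ι) :
    (∑ i ∈ s, y i * u i) * (∑ i ∈ s, x i * v i) ≤
      (∑ i ∈ s, x i * u i) * (∑ i ∈ s, y i * v i) := by
  have h := two_mul_sum_mul_sum_sub_sum_mul_sum s x y u v
  have : 0 ≤ ∑ i ∈ s, ∑ j ∈ s, (x i * y j - y i * x j) * (u i * v j - v i * u j) :=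
    sum_nonneg fun i _ => sum_nonneg fun j _ => hxy.minor_mul_minor_nonneg huv i j
  linarith

end TP2

structure IsPosLogConcave (p : ℕ) (a : ℕ → ℝ) : Prop where
  pos : ∀ i ≤ p, 0 < a i
  eq_zero : ∀ i, p < i → a i = 0
  sq_ge : ∀ i, 1 ≤ i → i + 1 ≤ p → a i ^ 2 ≥ a (i - 1) * a (i + 1)

def prependZero (a : ℕ → ℝ) : ℕ → ℝ
  | 0 => 0
  | i + 1 => a i

/-- Row `n` of the lower triangular Toeplitz matrix `(b (n - i))`. -/
def convKernel (b : ℕ → ℝ) (n i : ℕ) : ℝ :=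
  if i ≤ n then b (n - i) else 0

namespace IsPosLogConcave

variable {p : ℕ} {a : ℕ → ℝ}

theorem nonneg (ha : IsPosLogConcave p a) (i : ℕ) : 0 ≤ a i := by
  rcases le_or_gt i p with h | h
  · exact (ha.pos i h).le
  · exact (ha.eq_zero i h).ge

theorem mul_succ_le_succ_mul (ha : IsPosLogConcave p a) {i j : ℕ} (hij : i ≤ j) :
    a i * a (j + 1) ≤ a (i + 1) * a j := by
  induction j, hij using Nat.le_induction with
  | base => rw [mul_comm]
  | succ j hij ih =>
    rcases le_or_gt (j + 2) p with hj | hj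
    · have hsq : a j * a (j + 2) ≤ a (j + 1) ^ 2 := by
        simpa using ha.sq_ge (j + 1) (by omega) hj
      have hpos : 0 < a j := ha.pos j (by omega)
      refine le_of_mul_le_mul_right ?_ hpos
      nlinarith [mul_le_mul_of_nonneg_left hsq (ha.nonneg i),
        mul_le_mul_of_nonneg_right ih (ha.nonneg (j + 1))]
    · rw [ha.eq_zero _ hj, mul_zero]
      exact mul_nonneg (ha.nonneg _) (ha.nonneg _)

theorem tp2_prependZero (ha : IsPosLogConcave p a) : TP2 a (prependZero a) := by
  intro i j hij
  match i, j, hij with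
  | 0, 0, _ => simp [prependZero]
  | 0, j + 1, _ => simpa [prependZero] using mul_nonneg (ha.nonneg 0) (ha.nonneg j)
  | i + 1, 0, hij => omega
  | i + 1, j + 1, hij => exact ha.mul_succ_le_succ_mul (by omega)

theorem convKernel_nonneg (ha : IsPosLogConcave p a) (n i : ℕ) : 0 ≤ convKernel a n i := by
  unfold convKernel
  split_ifs
  exacts [ha.nonneg _, le_rfl]

theorem tp2_convKernel (ha : IsPosLogConcave p a) (n : ℕ) :
    TP2 (convKernel a n) (convKernel a (n + 1)) := by
  intro i j hij
  unfold convKernel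
  by_cases hj : j ≤ n
  · rw [if_pos (hij.trans hj), if_pos hj, if_pos (by omega), if_pos (by omega),
      show n + 1 - i = n - i + 1 by omega, show n + 1 - j = n - j + 1 by omega]
    linarith [ha.mul_succ_le_succ_mul (show n - j ≤ n - i by omega)]
  · rw [if_neg hj, mul_zero]
    exact mul_nonneg (ha.convKernel_nonneg _ _) (ha.convKernel_nonneg _ _)

end IsPosLogConcave

theorem sum_range_mul_convKernel (a b : ℕ → ℝ) {n N : ℕ} (hn : n < N) :
    ∑ i ∈ range N, a i * convKernel b n i = ∑ i ∈ range (n + 1), a i * b (n - i) := by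
  rw [← sum_subset (range_subset_range.2 hn) fun i _ hi => ?_]
  · refine sum_congr rfl fun i hi => ?_
    rw [convKernel, if_pos (Nat.lt_succ_iff.1 (mem_range.1 hi))]
  · rw [convKernel, if_neg (by simpa using hi), mul_zero]

theorem sum_range_prependZero_mul_convKernel (a b : ℕ → ℝ) (n N : ℕ) :
    ∑ i ∈ range (N + 1), prependZero a i * convKernel b (n + 1) i =
      ∑ i ∈ range N, a i * convKernel b n i := by
  simp [sum_range_succ', prependZero, convKernel]

theorem stmt_12 (p q : ℕ) (a b : ℕ → ℝ)
    (ha_pos : ∀ i ≤ p, 0 < a i) (hb_pos : ∀ j ≤ q, 0 < b j)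
    (ha_zero : ∀ i, p < i → a i = 0) (hb_zero : ∀ j, q < j → b j = 0)
    (ha_lc : ∀ i, 1 ≤ i → i + 1 ≤ p → a i ^ 2 ≥ a (i - 1) * a (i + 1))
    (hb_lc : ∀ j, 1 ≤ j → j + 1 ≤ q → b j ^ 2 ≥ b (j - 1) * b (j + 1))
    (c : ℕ → ℝ) (hc : ∀ k, c k = ∑ i ∈ Finset.range (k + 1), a i * b (k - i)) :
    ∀ k, 1 ≤ k → k + 1 ≤ p + q → c k ^ 2 ≥ c (k - 1) * c (k + 1) := by
  have ha : IsPosLogConcave p a := ⟨ha_pos, ha_zero, ha_lc⟩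
  have hb : IsPosLogConcave q b := ⟨hb_pos, hb_zero, hb_lc⟩
  rintro k hk -
  obtain ⟨m, rfl⟩ : ∃ m, k = m + 1 := ⟨k - 1, by omega⟩
  have hc_eq : ∀ n, n < m + 3 → c n = ∑ i ∈ range (m + 3), a i * convKernel b n i :=
    fun n hn => by rw [hc, sum_range_mul_convKernel a b hn]
  have hc_shift : ∀ n, n < m + 2 →
      c n = ∑ i ∈ range (m + 3), prependZero a i * convKernel b (n + 1) i :=
    fun n hn => by rw [sum_range_prependZero_mul_convKernel, hc, sum_range_mul_convKernel a b hn]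
  have key := ha.tp2_prependZero.sum_mul_sum_le (hb.tp2_convKernel (m + 1)) (range (m + 3))
  rw [← hc_shift m (by omega), ← hc_eq (m + 2) (by omega), ← hc_eq (m + 1) (by omega),
    ← hc_shift (m + 1) (by omega)] at key
  simpa [sq] using key
end
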